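/- Let α > 0, β > 0, and define g_α : ℝ → ℝ by g_α(u) = β + (α/2)u² if |u| ≥ √(2β/α), and g_α(u) = √(2αβ)·|u| if |u| ≤ √(2β/α). Then g_α is convex, continuous, and is the convex biconjugate (largest convex function below) of u ↦ (α/2)u² + β|u|₀; in particular g_α(u) ≤ (α/2)u² + β|u|₀ for all u, with equality iff u = 0 or |u| ≥ √(2β/α). -/
import Mathlib


/-- The "L⁰ norm" of a real number: 0 if `u = 0`, else 1. -/
noncomputable def nrm0 (u : ℝ) : ℝ := if u = 0 then 0 else 1

/-- The convexified integrand `g_α`. -/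
noncomputable def gconv (α β u : ℝ) : ℝ :=
  if Real.sqrt (2 * β / α) ≤ |u| then β + α / 2 * u ^ 2
  else Real.sqrt (2 * α * β) * |u|

section aux

variable {α β : ℝ}

lemma gc_s_pos (hα : 0 < α) (hβ : 0 < β) : 0 < Real.sqrt (2 * β / α) :=
  Real.sqrt_pos.2 (by positivity)

lemma gc_s_sq (hα : 0 < α) (hβ : 0 < β) : α * (Real.sqrt (2 * β / α)) ^ 2 = 2 * β := by
  rw [Real.sq_sqrt (by positivity)]
  field_simp

lemma gc_A_eq (hα : 0 < α) (hβ : 0 < β) : Real.sqrt (2 * α * β) = α * Real.sqrt (2 * β / α) := by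
  have h1 : (α * Real.sqrt (2 * β / α)) ^ 2 = 2 * α * β := by
    have := gc_s_sq hα hβ
    nlinarith [this]
  have h2 : 0 ≤ α * Real.sqrt (2 * β / α) := by positivity
  rw [← h1, Real.sqrt_sq h2]

/-- Linear lower bound. -/
lemma gc_L1 (hα : 0 < α) (hβ : 0 < β) (u : ℝ) : Real.sqrt (2 * α * β) * |u| ≤ gconv α β u := by
  unfold gconv
  split_ifs with h
  · rw [gc_A_eq hα hβ]
    have hs2 := gc_s_sq hα hβ
    nlinarith [sq_nonneg (|u| - Real.sqrt (2 * β / α)), sq_abs u]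
  · exact le_rfl

/-- Affine lower bounds from large slopes. -/
lemma gc_L2 (hα : 0 < α) (hβ : 0 < β) (u z : ℝ) (hz : Real.sqrt (2 * β / α) ≤ |z|) :
    α * z * u - α / 2 * z ^ 2 + β ≤ gconv α β u := by
  unfold gconv
  split_ifs with h
  · nlinarith [mul_nonneg hα.le (sq_nonneg (u - z))]
  · rw [gc_A_eq hα hβ]
    set s := Real.sqrt (2 * β / α) with hs
    have hu : |u| ≤ s := le_of_not_ge h
    have hzu : z * u ≤ |z| * |u| := by
      calc z * u ≤ |z * u| := le_abs_self _
        _ = |z| * |u| := abs_mul z u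
    have hs2 := gc_s_sq hα hβ
    nlinarith [mul_nonneg (sub_nonneg.2 hz) (sub_nonneg.2 hu),
      mul_nonneg (sub_nonneg.2 hz) (sub_nonneg.2 (hu.trans hz)),
      sq_abs z, mul_pos hα hβ, hα.le]

/-- Closed form without `if`. -/
lemma gc_eq (hα : 0 < α) (hβ : 0 < β) (u : ℝ) :
    gconv α β u = α / 2 * u ^ 2 + β -
      α / 2 * (max 0 (Real.sqrt (2 * β / α) - |u|)) ^ 2 := by
  unfold gconv
  have hs2 := gc_s_sq hα hβ
  split_ifs with h
  · rw [max_eq_left (by linarith)]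
    ring
  · rw [gc_A_eq hα hβ, max_eq_right (by linarith [le_of_not_ge h])]
    have := sq_abs u
    nlinarith [sq_abs u]

end aux

/-- `g_α` is convex, continuous, and is the convex biconjugate (the largest convex
function below) of `u ↦ (α/2)u² + β|u|₀`; it agrees with this function exactly at
`u = 0` and for `|u| ≥ √(2β/α)`. -/
theorem gconv_is_biconjugate (α β : ℝ) (hα : 0 < α) (hβ : 0 < β) :
    ConvexOn ℝ Set.univ (gconv α β) ∧
    Continuous (gconv α β) ∧
    (∀ u : ℝ, gconv α β u ≤ α / 2 * u ^ 2 + β * nrm0 u) ∧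
    (∀ φ : ℝ → ℝ, ConvexOn ℝ Set.univ φ →
      (∀ u : ℝ, φ u ≤ α / 2 * u ^ 2 + β * nrm0 u) →
      ∀ u : ℝ, φ u ≤ gconv α β u) ∧
    (∀ u : ℝ, gconv α β u = α / 2 * u ^ 2 + β * nrm0 u ↔
      u = 0 ∨ Real.sqrt (2 * β / α) ≤ |u|) := by
  set s := Real.sqrt (2 * β / α) with hs
  have hspos : 0 < s := gc_s_pos hα hβ
  have hs2 : α * s ^ 2 = 2 * β := gc_s_sq hα hβ
  have hAnn : 0 ≤ Real.sqrt (2 * α * β) := Real.sqrt_nonneg _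
  -- value at 0
  have hg0 : gconv α β 0 = 0 := by
    unfold gconv
    rw [abs_zero, if_neg (by linarith), mul_zero]
  -- g = quad on the quad region
  have hgquad : ∀ u : ℝ, s ≤ |u| → gconv α β u = β + α / 2 * u ^ 2 := by
    intro u hu
    unfold gconv
    rw [if_pos hu]
  have hglin : ∀ u : ℝ, ¬ s ≤ |u| → gconv α β u = Real.sqrt (2 * α * β) * |u| := by
    intro u hu
    unfold gconv
    rw [if_neg hu]
  refine ⟨?_, ?_, ?_, ?_, ?_⟩
  · -- convexity
    refine ⟨convex_univ, ?_⟩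
    intro x _ y _ a b ha hb hab
    simp only [smul_eq_mul]
    set z := a * x + b * y with hz
    by_cases hzc : s ≤ |z|
    · rw [hgquad z hzc]
      have h1 := gc_L2 hα hβ x z hzc
      have h2 := gc_L2 hα hβ y z hzc
      have e1 := mul_le_mul_of_nonneg_left h1 ha
      have e2 := mul_le_mul_of_nonneg_left h2 hb
      have key : a * (α * z * x - α / 2 * z ^ 2 + β)
          + b * (α * z * y - α / 2 * z ^ 2 + β) = β + α / 2 * z ^ 2 := by
        rw [hz]
        linear_combination (β - α / 2 * (a * x + b * y) ^ 2) * hab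
      linarith
    · rw [hglin z hzc]
      have h1 := gc_L1 hα hβ x
      have h2 := gc_L1 hα hβ y
      have habs : |z| ≤ a * |x| + b * |y| := by
        calc |z| ≤ |a * x| + |b * y| := abs_add_le _ _
          _ = a * |x| + b * |y| := by
              rw [abs_mul, abs_mul, abs_of_nonneg ha, abs_of_nonneg hb]
      nlinarith [mul_le_mul_of_nonneg_left h1 ha, mul_le_mul_of_nonneg_left h2 hb,
        mul_le_mul_of_nonneg_left habs hAnn]
  · -- continuity
    have : gconv α β = fun u => α / 2 * u ^ 2 + β - α / 2 * (max 0 (s - |u|)) ^ 2 := by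
      funext u
      exact gc_eq hα hβ u
    rw [this]
    fun_prop
  · -- g ≤ f
    intro u
    by_cases hu : u = 0
    · simp [hu, nrm0, hg0]
    · rw [nrm0, if_neg hu, mul_one]
      by_cases hc : s ≤ |u|
      · rw [hgquad u hc]
        exact le_of_eq (by ring)
      · rw [hglin u hc, gc_A_eq hα hβ]
        nlinarith [sq_nonneg (|u| - s), sq_abs u]
  · -- maximality
    intro φ hφ hle u
    by_cases hc : s ≤ |u|
    · rw [hgquad u hc]
      have hu0 : u ≠ 0 := by
        intro h; rw [h, abs_zero] at hc; linarith
      have := hle u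
      rw [nrm0, if_neg hu0, mul_one] at this
      linarith
    · rw [hglin u hc, gc_A_eq hα hβ]
      have hu : |u| < s := lt_of_not_ge hc
      set w : ℝ := if 0 ≤ u then s else -s with hw
      have hws : |w| = s := by
        rw [hw]; split_ifs <;> simp [abs_of_nonneg hspos.le, abs_of_nonpos (by linarith : -s ≤ 0)]
      have hwne : w ≠ 0 := by
        intro h; rw [h, abs_zero] at hws; linarith
      have hφ0 : φ 0 ≤ 0 := by
        have := hle 0
        simpa [nrm0] using this
      have hφw : φ w ≤ 2 * β := by
        have := hle w
        rw [nrm0, if_neg hwne, mul_one] at this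
        have hw2 : w ^ 2 = s ^ 2 := by rw [← sq_abs, hws]
        nlinarith
      have key : u = (1 - |u| / s) • (0 : ℝ) + (|u| / s) • w := by
        simp only [smul_eq_mul, mul_zero, zero_add]
        rw [hw]
        rcases le_or_gt 0 u with h | h
        · rw [if_pos h, abs_of_nonneg h]; field_simp
        · rw [if_neg (not_le.2 h), abs_of_neg h]; field_simp
      have hus1 : |u| / s ≤ 1 := by
        rw [div_le_one hspos]; linarith
      have ha' : (0:ℝ) ≤ 1 - |u| / s := by linarith
      have hb' : (0:ℝ) ≤ |u| / s := by positivity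
      have hab' : (1 - |u| / s) + |u| / s = 1 := by ring
      have hcvx := hφ.2 (Set.mem_univ (0 : ℝ)) (Set.mem_univ w) ha' hb' hab'
      rw [← key] at hcvx
      have hb1 : |u| / s * φ w ≤ |u| / s * (2 * β) :=
        mul_le_mul_of_nonneg_left hφw (by positivity)
      have ha1 : (1 - |u| / s) * φ 0 ≤ 0 := by
        apply mul_nonpos_of_nonneg_of_nonpos _ hφ0
        have : |u| / s ≤ 1 := by rw [div_le_one hspos]; linarith
        linarith
      have hfin : |u| / s * (2 * β) = α * s * |u| := by
        field_simp
        nlinarith [hs2]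
      simp only [smul_eq_mul] at hcvx
      linarith [hcvx, hb1, ha1, hfin.le, hfin.ge]
  · -- equality characterization
    intro u
    constructor
    · intro h
      by_contra hcon
      push_neg at hcon
      obtain ⟨hu0, hus⟩ := hcon
      rw [hglin u (not_le.2 hus), gc_A_eq hα hβ, nrm0, if_neg hu0, mul_one] at h
      have hu : 0 < |u| := abs_pos.2 hu0
      nlinarith [sq_nonneg (|u| - s), sq_abs u, mul_pos (sub_pos.2 hus) (sub_pos.2 hus)]
    · intro h
      rcases h with h | h
      · simp [h, hg0, nrm0]
      · have hu0 : u ≠ 0 := by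
          intro hh; rw [hh, abs_zero] at h; linarith
        rw [hgquad u h, nrm0, if_neg hu0, mul_one]
        ring
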